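/- There is a number f depending only on d and M (and not on the vectors) such that in the graph G, for all a≠b in {1,…,n}: Sum-Dist(S_a,S_b) = f + 2·Ham(v_a,v_b). Consequently, a pair of sets S_a,S_b minimizes Sum-Dist over all pairs if and only if the pair of vectors v_a,v_b minimizes the Hamming distance over all pairs. -/

import Mathlib

/-!
Every edge of `G` joins a vector vertex `u_{k,j}` or `u'_{k,j}` to one of the two hubs `ℓ, r`,
and for each vector vertex its two edge weights add up to `(2d+1)M+1`, at least any single edge
weight. So a detour through the other hub never pays, and between distinct vector vertices
`d(x, y) = min (w(x,ℓ) + w(y,ℓ)) (w(x,r) + w(y,r))`; the lower bound holds because the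
candidate distance from `x` changes along every edge by at most the edge weight.

Summing the four distances between `{u_{a,i}, u'_{a,i}}` and `{u_{b,j}, u'_{b,j}}`, the
multiples of `M = 4` decide every minimum except for the mixed pairs with `i = j`, where the bits
contribute `2·[v_a[i] ≠ v_b[i]]`.
-/

open Finset

namespace SumGadget

inductive V (n d : ℕ) : Type
  | U : Fin n → Fin d → V n d
  | U' : Fin n → Fin d → V n d
  | l : V n d
  | r : V n d
  deriving DecidableEq, Fintype

def M : ℕ := 4

/-- One-directional edge-weight table encoding the vectors, with complemented bits on the
right side; a value `0` means "no edge".  Here `j : Fin d` is 0-indexed, so `U k j` is the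
paper's `u_{k+1, j+1}`. -/
def wt0 (n d : ℕ) (v : Fin n → Fin d → Fin 2) : V n d → V n d → ℕ
  | V.U k j, V.l => (j.val + 1) * M + (v k j).val
  | V.U' k j, V.l => (2 * d - j.val) * M + (v k j).val
  | V.U k j, V.r => (2 * d - j.val) * M + (1 - (v k j).val)
  | V.U' k j, V.r => (j.val + 1) * M + (1 - (v k j).val)
  | _, _ => 0

/-- The symmetrized edge weight. -/
def wtE (n d : ℕ) (v : Fin n → Fin d → Fin 2) (x y : V n d) : ℕ :=
  wt0 n d v x y + wt0 n d v y x

/-- The graph `G`: `x` and `y` are adjacent iff the weight table records an edge. -/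
def G (n d : ℕ) (v : Fin n → Fin d → Fin 2) : SimpleGraph (V n d) :=
  SimpleGraph.fromRel fun x y => wt0 n d v x y ≠ 0

/-- The total weight of a walk. -/
def wWeight {n d : ℕ} {v : Fin n → Fin d → Fin 2} {x y : V n d}
    (p : (G n d v).Walk x y) : ℕ :=
  (p.darts.map fun e => wtE n d v e.toProd.1 e.toProd.2).sum

/-- The weighted shortest-path distance: the minimum over paths from `x` to `y` of the sum
of the edge weights along the path. -/
noncomputable def dist (n d : ℕ) (v : Fin n → Fin d → Fin 2) (x y : V n d) : ℕ :=
  sInf {m | ∃ p : (G n d v).Walk x y, p.IsPath ∧ wWeight p = m}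

/-- The set `S_k = {u_{k,j}, u'_{k,j} : j}` as a finite set of vertices. -/
def SF (n d : ℕ) (k : Fin n) : Finset (V n d) :=
  (Finset.univ.image fun j : Fin d => V.U k j)
    ∪ (Finset.univ.image fun j : Fin d => V.U' k j)

/-- `Sum-Dist(S_a, S_b) = Σ_{x ∈ S_a, y ∈ S_b} d(x, y)`. -/
noncomputable def sumDist (n d : ℕ) (v : Fin n → Fin d → Fin 2) (a b : Fin n) : ℕ :=
  ∑ p ∈ SF n d a ×ˢ SF n d b, dist n d v p.1 p.2

/-- The Hamming distance between `v_a` and `v_b`. -/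
def ham (n d : ℕ) (v : Fin n → Fin d → Fin 2) (a b : Fin n) : ℕ :=
  (Finset.univ.filter fun i : Fin d => v a i ≠ v b i).card

theorem _root_.SimpleGraph.Walk.le_add_sum_darts {W : Type*} {H : SimpleGraph W}
    (w : W → W → ℕ) (D : W → ℕ) (hD : ∀ a b, H.Adj a b → D b ≤ D a + w a b)
    {s t : W}
    (p : H.Walk s t) : D t ≤ D s + (p.darts.map fun e => w e.fst e.snd).sum := by
  induction p with
  | nil => simp
  | cons h p ih =>
    simp only [SimpleGraph.Walk.darts_cons, List.map_cons, List.sum_cons]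
    have := hD _ _ h
    omega

section

variable {n d : ℕ} {v : Fin n → Fin d → Fin 2}

lemma wtE_comm (x y : V n d) : wtE n d v x y = wtE n d v y x := add_comm _ _

lemma wtE_add_wtE {x : V n d} (hl : x ≠ .l) (hr : x ≠ .r) :
    wtE n d v x .l + wtE n d v x .r = (2 * d + 1) * M + 1 := by
  cases x with
  | U k j | U' k j => have := j.isLt; have := (v k j).isLt; simp [wtE, wt0, M]; omega
  | l | r => contradiction

lemma side_hub_or_hub_side_of_wtE_ne_zero {a b : V n d} (h : wtE n d v a b ≠ 0) :
    (a ≠ .l ∧ a ≠ .r ∧ (b = .l ∨ b = .r)) ∨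
      (b ≠ .l ∧ b ≠ .r ∧ (a = .l ∨ a = .r)) := by
  cases a <;> cases b <;> simp [wtE, wt0] at h ⊢

lemma wtE_ne_zero_of_adj {x y : V n d} (h : (G n d v).Adj x y) : wtE n d v x y ≠ 0 := by
  rw [G, SimpleGraph.fromRel_adj] at h
  unfold wtE
  omega

lemma adj_l_and_adj_r {x : V n d} (hl : x ≠ .l) (hr : x ≠ .r) :
    (G n d v).Adj x .l ∧ (G n d v).Adj x .r := by
  simp only [G, SimpleGraph.fromRel_adj]
  cases x with
  | U k j | U' k j => have := j.isLt; simp [wt0, M]; omega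
  | l | r => contradiction

lemma dist_le_wWeight {x y : V n d} {p : (G n d v).Walk x y} (hp : p.IsPath) :
    dist n d v x y ≤ wWeight p :=
  Nat.sInf_le ⟨p, hp, rfl⟩

lemma le_dist {x y : V n d} {m : ℕ} (hxy : (G n d v).Reachable x y)
    (hm : ∀ p : (G n d v).Walk x y, m ≤ wWeight p) : m ≤ dist n d v x y := by
  obtain ⟨p, hp⟩ := hxy.exists_isPath
  exact le_csInf ⟨_, p, hp, rfl⟩ fun _ ⟨q, _, hq⟩ => hq ▸ hm q

lemma dist_le_of_adj {x h y : V n d} (hxy : x ≠ y) (hxh : (G n d v).Adj x h)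
    (hhy : (G n d v).Adj h y) : dist n d v x y ≤ wtE n d v x h + wtE n d v h y := by
  have hp : (SimpleGraph.Walk.cons hxh (.cons hhy .nil)).IsPath := by
    simp [hxy, hxh.ne, hhy.ne]
  simpa [wWeight] using dist_le_wWeight hp

-- The distance from a vector vertex `x`, used as a potential for the edge weights.
def distFrom (v : Fin n → Fin d → Fin 2) (x z : V n d) : ℕ :=
  if z = .l then wtE n d v x .l
  else if z = .r then wtE n d v x .r
  else if z = x then 0
  else min (wtE n d v x .l + wtE n d v z .l) (wtE n d v x .r + wtE n d v z .r)

lemma distFrom_hub_le_and_le_hub {x z h : V n d} (hxl : x ≠ .l) (hxr : x ≠ .r)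
    (hzl : z ≠ .l) (hzr : z ≠ .r) (hh : h = .l ∨ h = .r) :
    distFrom v x h ≤ distFrom v x z + wtE n d v z h ∧
      distFrom v x z ≤ distFrom v x h + wtE n d v z h := by
  have hxz := (wtE_add_wtE (v := v) hxl hxr).trans (wtE_add_wtE (v := v) hzl hzr).symm
  rcases hh with rfl | rfl <;> obtain rfl | hzx := eq_or_ne z x <;>
    simp [distFrom, *] <;> omega

lemma distFrom_le_add {x a b : V n d} (hl : x ≠ .l) (hr : x ≠ .r) (hab : wtE n d v a b ≠ 0) :
    distFrom v x b ≤ distFrom v x a + wtE n d v a b := by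
  rcases side_hub_or_hub_side_of_wtE_ne_zero hab with ⟨hal, har, hb⟩ | ⟨hbl, hbr, ha⟩
  · exact (distFrom_hub_le_and_le_hub hl hr hal har hb).1
  · rw [wtE_comm]
    exact (distFrom_hub_le_and_le_hub hl hr hbl hbr ha).2

lemma dist_eq_min {x y : V n d} (hxl : x ≠ .l) (hxr : x ≠ .r) (hyl : y ≠ .l) (hyr : y ≠ .r)
    (hxy : x ≠ y) :
    dist n d v x y =
      min (wtE n d v x .l + wtE n d v y .l) (wtE n d v x .r + wtE n d v y .r) := by
  obtain ⟨hxL, hxR⟩ := adj_l_and_adj_r (v := v) hxl hxr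
  obtain ⟨hyL, hyR⟩ := adj_l_and_adj_r (v := v) hyl hyr
  refine le_antisymm (le_min ?_ ?_) (le_dist (hxL.reachable.trans hyL.symm.reachable) fun p => ?_)
  · simpa [wtE_comm _ y] using dist_le_of_adj hxy hxL hyL.symm
  · simpa [wtE_comm _ y] using dist_le_of_adj hxy hxR hyR.symm
  · have := p.le_add_sum_darts (wtE n d v) (distFrom v x)
      fun a b h => distFrom_le_add hxl hxr (wtE_ne_zero_of_adj h)
    simpa [distFrom, wWeight, hxl, hxr, hyl, hyr, hxy.symm] using this

def blockDistConst (d : ℕ) (i j : Fin d) : ℕ :=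
  2 * ((i + j + 2) * M + 1) + 2 * (2 * d + 1 - Nat.dist i j) * M + if i = j then 0 else 2

lemma dist_add_dist_add_dist_add_dist {a b : Fin n} (hab : a ≠ b) (i j : Fin d) :
    dist n d v (.U a i) (.U b j) + dist n d v (.U' a i) (.U' b j)
      + dist n d v (.U a i) (.U' b j) + dist n d v (.U' a i) (.U b j)
    = blockDistConst d i j + if i = j then (if v a i = v b j then 0 else 2) else 0 := by
  rw [dist_eq_min, dist_eq_min, dist_eq_min, dist_eq_min]
  · have := i.isLt
    have := j.isLt
    have := (v a i).isLt
    have := (v b j).isLt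
    simp only [wtE, wt0, blockDistConst, M, Nat.dist, Fin.ext_iff]
    split_ifs <;> omega
  all_goals simp [hab]

lemma sum_SF (k : Fin n) (g : V n d → ℕ) :
    ∑ x ∈ SF n d k, g x = ∑ j : Fin d, (g (.U k j) + g (.U' k j)) := by
  rw [SF, sum_union, sum_image fun _ _ _ _ h => (V.U.inj h).2,
    sum_image fun _ _ _ _ h => (V.U'.inj h).2, sum_add_distrib]
  simp [disjoint_left]

lemma two_mul_ham (a b : Fin n) :
    2 * ham n d v a b = ∑ i : Fin d, if v a i = v b i then 0 else 2 := by
  rw [ham, card_filter, mul_sum]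
  exact sum_congr rfl fun i _ => by split_ifs <;> simp_all

lemma sumDist_eq_sum_add_two_mul_ham {a b : Fin n} (hab : a ≠ b) :
    sumDist n d v a b = ∑ i, ∑ j, blockDistConst d i j + 2 * ham n d v a b := by
  calc sumDist n d v a b
      = ∑ i, ∑ j, (dist n d v (.U a i) (.U b j) + dist n d v (.U' a i) (.U' b j)
          + dist n d v (.U a i) (.U' b j) + dist n d v (.U' a i) (.U b j)) := by
        simp only [sumDist, sum_product, sum_SF, sum_add_distrib]
        ring
    _ = ∑ i, ∑ j, (blockDistConst d i j +
          if i = j then (if v a i = v b j then 0 else 2) else 0) := by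
        simp only [dist_add_dist_add_dist_add_dist hab]
    _ = ∑ i, ∑ j, blockDistConst d i j + 2 * ham n d v a b := by
        simp only [sum_add_distrib, sum_ite_eq, mem_univ, if_true, two_mul_ham]

end

theorem sumDist_eq_ham_general (n d : ℕ) :
    ∃ f : ℕ,
      (∀ v : Fin n → Fin d → Fin 2, ∀ a b : Fin n, a ≠ b →
        sumDist n d v a b = f + 2 * ham n d v a b)
      ∧ (∀ v : Fin n → Fin d → Fin 2, ∀ a b : Fin n, a ≠ b →
          ((∀ a' b' : Fin n, a' ≠ b' → sumDist n d v a b ≤ sumDist n d v a' b')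
            ↔ (∀ a' b' : Fin n, a' ≠ b' → ham n d v a b ≤ ham n d v a' b'))) := by
  refine ⟨∑ i, ∑ j, blockDistConst d i j, fun v a b hab => sumDist_eq_sum_add_two_mul_ham hab,
    fun v a b hab => forall₂_congr fun a' b' => imp_congr_right fun hab' => ?_⟩
  rw [sumDist_eq_sum_add_two_mul_ham hab, sumDist_eq_sum_add_two_mul_ham hab']
  omega

/-- There is a number `f` depending only on `d` and `M` (not on the vectors) such that for
all `a ≠ b`, `Sum-Dist(S_a,S_b) = f + 2·Ham(v_a,v_b)`; consequently a pair of sets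
minimizes `Sum-Dist` iff the corresponding pair of vectors minimizes the Hamming
distance. -/
theorem sumDist_eq_ham (n d : ℕ) (hn : 2 ≤ n) (hd : 1 ≤ d) :
    ∃ f : ℕ,
      (∀ v : Fin n → Fin d → Fin 2, ∀ a b : Fin n, a ≠ b →
        sumDist n d v a b = f + 2 * ham n d v a b)
      ∧ (∀ v : Fin n → Fin d → Fin 2, ∀ a b : Fin n, a ≠ b →
          ((∀ a' b' : Fin n, a' ≠ b' → sumDist n d v a b ≤ sumDist n d v a' b')
            ↔ (∀ a' b' : Fin n, a' ≠ b' → ham n d v a b ≤ ham n d v a' b'))) :=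
  sumDist_eq_ham_general n d

end SumGadget
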